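/- arXiv:1512.06258 — 2 statements merged into one kernel-verified Lean document; each statement's English description precedes it below -/
import Mathlib

section
/- If a sequence of completely continuous operators β_m on a p-adic Banach space converges to β in operator norm, then the Fredholm determinants det(1 − β_m T) converge coefficientwise to det(1 − β T). -/
/-!
In the nonarchimedean setting a determinant is bounded by the product of bounds for its rows,
with no `j!` loss. Hence a principal `j × j` minor through a far-out row of a completely continuous
matrix is small, so the minors are summable over the `j`-subsets of `ℕ`; and if all entries move
by at most `ε`, every `j × j` minor moves by at most `ε c ^ j`. Since an ultrametric sum is bounded
by the supremum of its terms, this uniform convergence of the minors passes to their sums.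
-/

/-- The `j`-th Fredholm coefficient `C_j(B)`: the sum of all principal `j×j`
subdeterminants of the matrix `B` (indexed by an orthonormal basis). -/
noncomputable def minorSum {K : Type*} [NormedField K] (B : ℕ → ℕ → K) (j : ℕ) : K :=
  ∑' s : {s : Finset ℕ // s.card = j},
    Matrix.det (Matrix.of fun i k : ((s : Finset ℕ) : Finset ℕ) => B i.1 k.1)

open Filter Topology

namespace IsUltrametricDist

variable {K : Type*} [NormedField K] [IsUltrametricDist K] {ι : Type*}

theorem norm_det_le_prod [Fintype ι] [DecidableEq ι] (A : Matrix ι ι K) {r : ι → ℝ}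
    (hr : ∀ i, 0 ≤ r i) (h : ∀ i k, ‖A i k‖ ≤ r i) : ‖A.det‖ ≤ ∏ i, r i := by
  rw [Matrix.det_apply]
  refine norm_sum_le_of_forall_le_of_nonneg (Finset.prod_nonneg fun i _ => hr i) fun σ _ => ?_
  rw [norm_units_zsmul, norm_prod, ← Equiv.prod_comp σ r]
  exact Finset.prod_le_prod (fun i _ => norm_nonneg _) fun i _ => h (σ i) i

theorem norm_det_le_of_forall_norm_row_le [Fintype ι] [DecidableEq ι] (A : Matrix ι ι K)
    {c δ : ℝ} (hc : 0 ≤ c) (hδ : 0 ≤ δ) (hA : ∀ i k, ‖A i k‖ ≤ c) (i₀ : ι)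
    (hi₀ : ∀ k, ‖A i₀ k‖ ≤ δ) : ‖A.det‖ ≤ δ * c ^ (Fintype.card ι - 1) := by
  have := norm_det_le_prod A (r := Function.update (fun _ => c) i₀ δ)
    (fun i => by rcases eq_or_ne i i₀ with rfl | h <;> simp [*])
    (fun i k => by rcases eq_or_ne i i₀ with rfl | h <;> simp [*])
  rwa [Finset.prod_update_of_mem (Finset.mem_univ i₀), Finset.prod_const,
    Finset.card_sdiff_of_subset (by simp), Finset.card_univ, Finset.card_singleton] at this

theorem norm_prod_sub_prod_le (s : Finset ι) {f g : ι → K} {c ε : ℝ} (hc : 1 ≤ c) (hε : 0 ≤ ε)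
    (hf : ∀ i ∈ s, ‖f i‖ ≤ c) (hg : ∀ i ∈ s, ‖g i‖ ≤ c) (hfg : ∀ i ∈ s, ‖f i - g i‖ ≤ ε) :
    ‖∏ i ∈ s, f i - ∏ i ∈ s, g i‖ ≤ ε * c ^ s.card := by
  induction s using Finset.cons_induction with
  | empty => simpa using hε
  | cons a s ha ih =>
    simp only [Finset.forall_mem_cons] at hf hg hfg
    have hprod : ‖∏ i ∈ s, f i‖ ≤ c ^ s.card := by
      rw [norm_prod, ← Finset.prod_const]
      exact Finset.prod_le_prod (fun i _ => norm_nonneg _) hf.2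
    rw [Finset.prod_cons, Finset.prod_cons, Finset.card_cons,
      show ∀ x y P Q : K, x * P - y * Q = (x - y) * P + y * (P - Q) by intros; ring]
    refine (norm_add_le_max _ _).trans (max_le ?_ ?_) <;> rw [norm_mul]
    · calc _ ≤ ε * c ^ s.card := mul_le_mul hfg.1 hprod (norm_nonneg _) hε
        _ ≤ ε * c ^ (s.card + 1) :=
            mul_le_mul_of_nonneg_left (pow_le_pow_right₀ hc s.card.le_succ) hε
    · calc _ ≤ c * (ε * c ^ s.card) :=
            mul_le_mul hg.1 (ih hf.2 hg.2 hfg.2) (norm_nonneg _) (by linarith)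
        _ = ε * c ^ (s.card + 1) := by ring

theorem norm_det_sub_det_le [Fintype ι] [DecidableEq ι] {A A' : Matrix ι ι K} {c ε : ℝ}
    (hc : 1 ≤ c) (hε : 0 ≤ ε) (hA : ∀ i k, ‖A i k‖ ≤ c) (hA' : ∀ i k, ‖A' i k‖ ≤ c)
    (hd : ∀ i k, ‖A i k - A' i k‖ ≤ ε) : ‖A.det - A'.det‖ ≤ ε * c ^ Fintype.card ι := by
  rw [Matrix.det_apply, Matrix.det_apply, ← Finset.sum_sub_distrib]
  refine norm_sum_le_of_forall_le_of_nonneg (mul_nonneg hε (by positivity)) fun σ _ => ?_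
  rw [← smul_sub, norm_units_zsmul, ← Finset.card_univ]
  exact norm_prod_sub_prod_le _ hc hε (fun i _ => hA _ _) (fun i _ => hA' _ _) fun i _ => hd _ _

theorem tendsto_tsum_of_tendstoUniformly {α E : Type*} [NormedAddCommGroup E]
    [IsUltrametricDist E] {F : ι → α → E} {f : α → E} {l : Filter ι}
    (hF : ∀ᶠ i in l, Summable (F i)) (hf : Summable f) (h : TendstoUniformly F f l) :
    Tendsto (fun i => ∑' a, F i a) l (𝓝 (∑' a, f a)) := by
  rw [Metric.tendsto_nhds]
  intro ε hε
  filter_upwards [hF, Metric.tendstoUniformly_iff.1 h (ε / 2) (half_pos hε)] with i hFi hi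
  rw [dist_eq_norm, ← hFi.tsum_sub hf]
  refine (norm_tsum_le_of_forall_le_of_nonneg (half_pos hε).le fun a => ?_).trans_lt
    (half_lt_self hε)
  rw [← dist_eq_norm, dist_comm]
  exact (hi a).le

end IsUltrametricDist

def principalMinor {K : Type*} (A : ℕ → ℕ → K) (s : Finset ℕ) : Matrix s s K :=
  Matrix.of fun i k => A i k

theorem minorSum_eq_tsum_det_principalMinor {K : Type*} [NormedField K] (A : ℕ → ℕ → K)
    (j : ℕ) :
    minorSum A j = ∑' s : {s : Finset ℕ // s.card = j}, (principalMinor A s).det :=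
  rfl

section Minors

variable {K : Type*} [NormedField K] [IsUltrametricDist K]

theorem summable_det_principalMinor [CompleteSpace K] {A : ℕ → ℕ → K}
    (hcc : ∀ ε > (0 : ℝ), ∃ N, ∀ i ≥ N, ∀ k, ‖A i k‖ ≤ ε) (hbd : ∃ C, ∀ i k, ‖A i k‖ ≤ C)
    (j : ℕ) : Summable fun s : {s : Finset ℕ // s.card = j} => (principalMinor A s).det := by
  obtain ⟨C, hC⟩ := hbd
  set c := max C 1
  have hc : 0 < c := zero_lt_one.trans_le (le_max_right _ _)
  apply NonarchimedeanAddGroup.summable_of_tendsto_cofinite_zero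
  rw [Metric.nhds_basis_closedBall.tendsto_right_iff]
  intro ε hε
  obtain ⟨N, hN⟩ := hcc (ε / c ^ (j - 1)) (by positivity)
  have hfin : {s : {s : Finset ℕ // s.card = j} | (s : Finset ℕ) ⊆ Finset.range N}.Finite :=
    ((Finset.range N).powerset.finite_toSet.preimage Subtype.val_injective.injOn).subset
      fun s hs => Finset.mem_powerset.2 hs
  filter_upwards [hfin.eventually_cofinite_notMem] with s hs
  obtain ⟨i, his, hiN⟩ := Finset.not_subset.1 hs
  have hdet := IsUltrametricDist.norm_det_le_of_forall_norm_row_le (principalMinor A s) hc.le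
    (by positivity) (fun i k => (hC i k).trans (le_max_left _ _)) ⟨i, his⟩
    fun k => hN i (by simpa using hiN) k
  rwa [Fintype.card_coe, s.2, div_mul_cancel₀ _ (pow_pos hc _).ne', ← mem_closedBall_zero_iff]
    at hdet

theorem tendstoUniformly_det_principalMinor {ι : Type*} {l : Filter ι} {B : ι → ℕ → ℕ → K}
    {A : ℕ → ℕ → K} (hbd : ∃ C, ∀ i k, ‖A i k‖ ≤ C)
    (hconv : ∀ ε > (0 : ℝ), ∀ᶠ m in l, ∀ i k, ‖B m i k - A i k‖ ≤ ε) (j : ℕ) :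
    TendstoUniformly (fun m (s : {s : Finset ℕ // s.card = j}) => (principalMinor (B m) s).det)
      (fun s => (principalMinor A s).det) l := by
  obtain ⟨C, hC⟩ := hbd
  set c := max C 1
  have hc : 1 ≤ c := le_max_right _ _
  have hA : ∀ i k, ‖A i k‖ ≤ c := fun i k => (hC i k).trans (le_max_left _ _)
  rw [Metric.tendstoUniformly_iff]
  intro ε hε
  set δ := min 1 (ε / (2 * c ^ j))
  have hδ : 0 < δ := lt_min one_pos (by positivity)
  filter_upwards [hconv δ hδ] with m hm s
  have hB : ∀ i k, ‖B m i k‖ ≤ c := fun i k => by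
    rw [← sub_add_cancel (B m i k) (A i k)]
    exact (IsUltrametricDist.norm_add_le_max _ _).trans
      (max_le ((hm i k).trans ((min_le_left _ _).trans hc)) (hA i k))
  have hdet := IsUltrametricDist.norm_det_sub_det_le (A := principalMinor (B m) s)
    (A' := principalMinor A s) hc hδ.le (fun i k => hB i k) (fun i k => hA i k) fun i k => hm i k
  rw [Fintype.card_coe, s.2] at hdet
  rw [dist_comm, dist_eq_norm]
  calc _ ≤ δ * c ^ j := hdet
    _ ≤ ε / (2 * c ^ j) * c ^ j := by gcongr; exact min_le_right _ _
    _ < ε := by field_simp; linarith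

end Minors

/-- If completely continuous operators `B m` converge to `Blim` in operator norm
(uniformly on matrix entries), the Fredholm determinants `det(1 − B_m T)` converge
coefficientwise to `det(1 − Blim T)`. -/
theorem fredholm_det_continuous {K : Type*} [NormedField K] [CompleteSpace K]
    [IsUltrametricDist K]
    (B : ℕ → (ℕ → ℕ → K)) (Blim : ℕ → ℕ → K)
    (hcc : ∀ ε > (0 : ℝ), ∃ N, ∀ i ≥ N, ∀ k, ‖Blim i k‖ ≤ ε)
    (hccm : ∀ m, ∀ ε > (0 : ℝ), ∃ N, ∀ i ≥ N, ∀ k, ‖B m i k‖ ≤ ε)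
    (hbd : ∃ Cb : ℝ, ∀ i k, ‖Blim i k‖ ≤ Cb)
    (hbdm : ∀ m, ∃ Cb : ℝ, ∀ i k, ‖B m i k‖ ≤ Cb)
    (hconv : ∀ ε > (0 : ℝ), ∃ N, ∀ m ≥ N, ∀ i k, ‖B m i k - Blim i k‖ ≤ ε) :
    ∀ j, Filter.Tendsto (fun m => minorSum (B m) j) Filter.atTop
      (nhds (minorSum Blim j)) := by
  intro j
  simp only [minorSum_eq_tsum_det_principalMinor]
  exact IsUltrametricDist.tendsto_tsum_of_tendstoUniformly
    (Eventually.of_forall fun m => summable_det_principalMinor (hccm m) (hbdm m) j)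
    (summable_det_principalMinor hcc hbd j)
    (tendstoUniformly_det_principalMinor hbd (fun ε hε => eventually_atTop.2 (hconv ε hε)) j)
end

section
/- Let B be the matrix of a completely continuous operator on a p-adic Banach space over a discrete valuation ring R with uniformizer π, such that B ≡ diag(1, 0, 0, ...) mod π (i.e., the (0,0)-entry is ≡ 1 and all other entries are ≡ 0 mod π). Then det(1 − BT) ≡ 1 − T mod π, and hence det(1 − BT) has exactly one reciprocal root that is a p-adic unit, and that root is a 1-unit. -/
/-!
Write `f(t) = ∑ (-1)^j C_j t^j` for `det(1 - B t)`. Every principal minor of size `j ≥ 2`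
contains a row `≡ 0 mod π`, and `C_1 = tr B ≡ 1`, so `f ≡ 1 - t mod π`. The coefficients of
`t ↦ t + f(t)` are therefore `≡ 1` in degree `0` and `≡ 0` in positive degrees, so by the
ultrametric inequality this map sends the closed unit ball into `1 + π R` and is
`|π|`-Lipschitz there. By Banach's fixed point theorem `f` has exactly one zero `t` with
`|t| ≤ 1`, and `|t - 1| ≤ |π|`; the unit reciprocal roots are the `α = t⁻¹`.
-/

open Filter Topology IsUltrametricDist
open scoped NNReal

lemma norm_eq_one_of_norm_sub_one_lt {R : Type*} [NormedRing R] [NormOneClass R]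
    [IsUltrametricDist R] {x : R} (h : ‖x - 1‖ < 1) : ‖x‖ = 1 := by
  simpa using norm_eq_of_add_norm_lt_max (x := x) (y := -1)
    (by simpa [← sub_eq_add_neg] using Or.inr h)

lemma norm_inv_sub_one_of_norm_eq_one {K : Type*} [NormedField K] {x : K} (hx : ‖x‖ = 1) :
    ‖x⁻¹ - 1‖ = ‖x - 1‖ := by
  have hx0 : x ≠ 0 := norm_ne_zero_iff.mp (hx ▸ one_ne_zero)
  calc ‖x⁻¹ - 1‖ = ‖x⁻¹ * (1 - x)‖ := by rw [mul_sub, mul_one, inv_mul_cancel₀ hx0]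
    _ = ‖x - 1‖ := by rw [norm_mul, norm_inv, hx, inv_one, one_mul, norm_sub_rev]

lemma norm_pow_sub_pow_le {K : Type*} [NormedField K] [IsUltrametricDist K]
    {x y : K} (hx : ‖x‖ ≤ 1) (hy : ‖y‖ ≤ 1) (n : ℕ) :
    ‖x ^ n - y ^ n‖ ≤ ‖x - y‖ := by
  rw [← geom_sum₂_mul, norm_mul]
  refine mul_le_of_le_one_left (norm_nonneg _) (norm_sum_le_of_forall_le_of_nonneg zero_le_one ?_)
  intro i _
  rw [norm_mul, norm_pow, norm_pow]
  exact mul_le_one₀ (pow_le_one₀ (norm_nonneg _) hx) (by positivity) (pow_le_one₀ (norm_nonneg _) hy)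

lemma tsum_mul_zero_pow {R : Type*} [Semiring R] [TopologicalSpace R] (c : ℕ → R) :
    ∑' j, c j * (0 : R) ^ j = c 0 := by
  rw [tsum_eq_single 0 fun j hj => by simp [hj]]
  simp

lemma Matrix.norm_det_le_of_norm_row_le {R ι : Type*} [NormedCommRing R] [NormOneClass R]
    [IsUltrametricDist R] [Fintype ι] [DecidableEq ι] (M : Matrix ι ι R) {r : ℝ} (hr : 0 ≤ r)
    (hM : ∀ i j, ‖M i j‖ ≤ 1) (i₀ : ι) (hi₀ : ∀ j, ‖M i₀ j‖ ≤ r) :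
    ‖M.det‖ ≤ r := by
  rw [Matrix.det_apply']
  refine norm_sum_le_of_forall_le_of_nonneg hr fun σ _ => ?_
  calc ‖(Equiv.Perm.sign σ : R) * ∏ i, M (σ i) i‖
      ≤ ∏ i, ‖M (σ i) i‖ :=
        (norm_mul_le _ _).trans <| mul_le_of_le_one_left (norm_nonneg _)
          (norm_intCast_le_one R _) |>.trans (Finset.norm_prod_le _ _)
    _ ≤ ∏ i, if i = σ⁻¹ i₀ then r else 1 := by
        gcongr with i
        split_ifs with h
        · simpa [h] using hi₀ (σ⁻¹ i₀)
        · exact hM _ _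
    _ = r := by simp

section PowerSeries

variable {K : Type*} [NormedField K] {c : ℕ → K} {r : ℝ≥0}

lemma tendsto_add_single_one (hc : Tendsto c atTop (𝓝 0)) :
    Tendsto (c + Pi.single 1 1 : ℕ → K) atTop (𝓝 0) :=
  hc.congr' <| eventually_atTop.mpr ⟨2, fun j hj => by
    rw [Pi.add_apply, Pi.single_eq_of_ne (by omega), add_zero]⟩

lemma norm_add_single_one_le (hc1 : ‖c 1 + 1‖ ≤ r) (hc2 : ∀ j, 2 ≤ j → ‖c j‖ ≤ r) :
    ∀ j ≠ 0, ‖(c + Pi.single 1 1 : ℕ → K) j‖ ≤ r := by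
  intro j hj
  rcases eq_or_ne j 1 with rfl | hj1
  · simpa using hc1
  · simpa [Pi.single_apply, hj1] using hc2 j (by omega)

variable [IsUltrametricDist K] [CompleteSpace K]

lemma summable_mul_pow_of_tendsto (hc : Tendsto c atTop (𝓝 0)) {t : K} (ht : ‖t‖ ≤ 1) :
    Summable fun j => c j * t ^ j := by
  refine NonarchimedeanAddGroup.summable_of_tendsto_cofinite_zero ?_
  rw [Nat.cofinite_eq_atTop]
  refine squeeze_zero_norm (fun j => ?_) (tendsto_zero_iff_norm_tendsto_zero.mp hc)
  rw [norm_mul, norm_pow]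
  exact mul_le_of_le_one_right (norm_nonneg _) (pow_le_one₀ (norm_nonneg _) ht)

lemma norm_tsum_mul_pow_sub_tsum_mul_pow_le (hc : Tendsto c atTop (𝓝 0))
    (hcr : ∀ j ≠ 0, ‖c j‖ ≤ r) {t u : K} (ht : ‖t‖ ≤ 1) (hu : ‖u‖ ≤ 1) :
    ‖∑' j, c j * t ^ j - ∑' j, c j * u ^ j‖ ≤ r * ‖t - u‖ := by
  rw [← (summable_mul_pow_of_tendsto hc ht).tsum_sub (summable_mul_pow_of_tendsto hc hu)]
  refine norm_tsum_le_of_forall_le_of_nonneg (by positivity) fun j => ?_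
  rcases eq_or_ne j 0 with rfl | hj
  · simpa using by positivity
  · rw [← mul_sub, norm_mul]
    exact mul_le_mul (hcr j hj) (norm_pow_sub_pow_le ht hu j) (norm_nonneg _) r.2

lemma norm_tsum_mul_pow_sub_one_le (hc : Tendsto c atTop (𝓝 0)) (hc0 : ‖c 0 - 1‖ ≤ r)
    (hcr : ∀ j ≠ 0, ‖c j‖ ≤ r) {t : K} (ht : ‖t‖ ≤ 1) :
    ‖∑' j, c j * t ^ j - 1‖ ≤ r := by
  have hlip := norm_tsum_mul_pow_sub_tsum_mul_pow_le hc hcr ht (norm_zero.trans_le zero_le_one)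
  rw [tsum_mul_zero_pow, sub_zero] at hlip
  rw [← sub_add_sub_cancel _ (c 0)]
  exact (norm_add_le_max _ _).trans <| max_le (hlip.trans (mul_le_of_le_one_right r.2 ht)) hc0

theorem existsUnique_tsum_mul_pow_eq_self (hr : r < 1) (hc : Tendsto c atTop (𝓝 0))
    (hc0 : ‖c 0 - 1‖ ≤ r) (hcr : ∀ j ≠ 0, ‖c j‖ ≤ r) :
    ∃! t : K, ‖t‖ ≤ 1 ∧ ∑' j, c j * t ^ j = t := by
  set f : K → K := fun t => ∑' j, c j * t ^ j
  have hmaps : Set.MapsTo f (Metric.closedBall 0 1) (Metric.closedBall 0 1) := fun t ht => by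
    rw [mem_closedBall_zero_iff] at ht ⊢
    simpa using (norm_add_one_le_max_norm_one (f t - 1)).trans <|
      max_le ((norm_tsum_mul_pow_sub_one_le hc hc0 hcr ht).trans hr.le) le_rfl
  have hlip : LipschitzOnWith r f (Metric.closedBall 0 1) :=
    LipschitzOnWith.of_dist_le_mul fun t ht u hu => by
      rw [mem_closedBall_zero_iff] at ht hu
      simpa only [dist_eq_norm] using norm_tsum_mul_pow_sub_tsum_mul_pow_le hc hcr ht hu
  obtain ⟨t, ht, hft, -⟩ := ContractingWith.exists_fixedPoint' Metric.isClosed_closedBall.isComplete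
    hmaps ⟨hr, hlip.mapsToRestrict hmaps⟩ (Metric.mem_closedBall_self zero_le_one) (edist_ne_top _ _)
  refine ⟨t, ⟨mem_closedBall_zero_iff.mp ht, hft⟩, fun u ⟨hu, hfu⟩ => ?_⟩
  have hcontr := hlip.dist_le_mul u (mem_closedBall_zero_iff.mpr hu) t ht
  rw [show f u = u from hfu, hft.eq] at hcontr
  have hr' : (r : ℝ) < 1 := hr
  exact dist_le_zero.mp <| by nlinarith [dist_nonneg (x := u) (y := t)]

lemma hasSum_mul_pow_zero_iff_tsum_add_single_eq (hc : Tendsto c atTop (𝓝 0)) {t : K}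
    (ht : ‖t‖ ≤ 1) :
    HasSum (fun j => c j * t ^ j) 0 ↔ ∑' j, (c + Pi.single 1 1 : ℕ → K) j * t ^ j = t := by
  have hX : HasSum (fun j => (Pi.single 1 1 : ℕ → K) j * t ^ j) t := by
    simpa using hasSum_single (f := fun j => (Pi.single 1 1 : ℕ → K) j * t ^ j) 1
      fun j hj => by simp [hj]
  have hsum := (summable_mul_pow_of_tendsto hc ht).hasSum
  rw [((hsum.add hX).congr_fun fun j => by simp [add_mul]).tsum_eq,
    (summable_mul_pow_of_tendsto hc ht).hasSum_iff, add_eq_right]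

theorem existsUnique_hasSum_mul_pow_eq_zero (hr : r < 1) (hc : Tendsto c atTop (𝓝 0))
    (hc0 : ‖c 0 - 1‖ ≤ r) (hc1 : ‖c 1 + 1‖ ≤ r) (hc2 : ∀ j, 2 ≤ j → ‖c j‖ ≤ r) :
    ∃! t : K, ‖t‖ ≤ 1 ∧ HasSum (fun j => c j * t ^ j) 0 := by
  refine (existsUnique_congr fun t => ?_).mpr <| existsUnique_tsum_mul_pow_eq_self hr
    (tendsto_add_single_one hc) (by simpa using hc0) (norm_add_single_one_le hc1 hc2)
  exact and_congr_right (hasSum_mul_pow_zero_iff_tsum_add_single_eq hc)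

theorem norm_sub_one_le_of_hasSum_mul_pow_eq_zero (hc : Tendsto c atTop (𝓝 0))
    (hc0 : ‖c 0 - 1‖ ≤ r) (hc1 : ‖c 1 + 1‖ ≤ r) (hc2 : ∀ j, 2 ≤ j → ‖c j‖ ≤ r) {t : K}
    (ht : ‖t‖ ≤ 1) (hzero : HasSum (fun j => c j * t ^ j) 0) : ‖t - 1‖ ≤ r := by
  rw [hasSum_mul_pow_zero_iff_tsum_add_single_eq hc ht] at hzero
  rw [← hzero]
  exact norm_tsum_mul_pow_sub_one_le (tendsto_add_single_one hc)
    (by simpa using hc0) (norm_add_single_one_le hc1 hc2) ht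

end PowerSeries

section Fredholm

variable {K : Type*} [NormedField K] (B : ℕ → ℕ → K)

lemma minorSum_zero : minorSum B 0 = 1 := by
  rw [minorSum, tsum_eq_single ⟨∅, Finset.card_empty⟩
    fun s hs => absurd (Subtype.ext (Finset.card_eq_zero.mp s.2)) hs]
  exact Matrix.det_isEmpty

lemma minorSum_one : minorSum B 1 = ∑' i, B i i := by
  let e : ℕ ≃ {s : Finset ℕ // s.card = 1} := Equiv.ofBijective
    (fun i => ⟨{i}, Finset.card_singleton i⟩)
    ⟨fun _ _ h => Finset.singleton_injective (congrArg Subtype.val h), fun ⟨s, hs⟩ =>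
      let ⟨a, ha⟩ := Finset.card_eq_one.mp hs; ⟨a, Subtype.ext ha.symm⟩⟩
  rw [minorSum, ← e.tsum_eq]
  refine tsum_congr fun i => ?_
  change Matrix.det (Matrix.of fun j k : ({i} : Finset ℕ) => B j.1 k.1) = B i i
  rw [Matrix.det_unique]
  simp

variable [IsUltrametricDist K] {B}

lemma norm_minorSum_le {j : ℕ} {r : ℝ} (hr : 0 ≤ r) (hB : ∀ i k, ‖B i k‖ ≤ 1)
    (hrow : ∀ s : Finset ℕ, s.card = j → ∃ i ∈ s, ∀ k, ‖B i k‖ ≤ r) :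
    ‖minorSum B j‖ ≤ r := by
  refine norm_tsum_le_of_forall_le_of_nonneg hr fun ⟨s, hs⟩ => ?_
  obtain ⟨i, hi, hri⟩ := hrow s hs
  exact Matrix.norm_det_le_of_norm_row_le _ hr (fun _ _ => hB _ _) ⟨i, hi⟩ fun _ => hri _

lemma tendsto_minorSum_atTop (hB : ∀ i k, ‖B i k‖ ≤ 1)
    (hrows : ∀ ε > (0 : ℝ), ∃ N, ∀ i ≥ N, ∀ k, ‖B i k‖ ≤ ε) :
    Tendsto (minorSum B) atTop (𝓝 0) := by
  refine Metric.nhds_basis_closedBall.tendsto_right_iff.mpr fun ε hε => ?_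
  obtain ⟨N, hN⟩ := hrows ε hε
  refine eventually_atTop.mpr ⟨N + 1, fun j hj => ?_⟩
  rw [Metric.mem_closedBall, dist_zero_right]
  refine norm_minorSum_le hε.le hB fun s hs => ?_
  obtain ⟨i, hi, hiN⟩ := Finset.exists_mem_notMem_of_card_lt_card
    (s := Finset.range N) (t := s) (by simpa [hs] using hj)
  exact ⟨i, hi, hN i (by simpa using hiN)⟩

lemma norm_minorSum_le_of_two_le {r : ℝ} (hoff : ∀ i k, ¬(i = 0 ∧ k = 0) → ‖B i k‖ ≤ r)
    (hr : 0 ≤ r) (hB : ∀ i k, ‖B i k‖ ≤ 1) {j : ℕ} (hj : 2 ≤ j) :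
    ‖minorSum B j‖ ≤ r := by
  refine norm_minorSum_le hr hB fun s hs => ?_
  obtain ⟨i, hi, hi0⟩ := Finset.exists_mem_ne (hs ▸ hj) 0
  exact ⟨i, hi, fun k => hoff i k (hi0 ·.1)⟩

lemma norm_minorSum_one_sub_one_le [CompleteSpace K] {r : ℝ}
    (hoff : ∀ i k, ¬(i = 0 ∧ k = 0) → ‖B i k‖ ≤ r)
    (hrows : ∀ ε > (0 : ℝ), ∃ N, ∀ i ≥ N, ∀ k, ‖B i k‖ ≤ ε) (h00 : ‖B 0 0 - 1‖ ≤ r) :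
    ‖minorSum B 1 - 1‖ ≤ r := by
  have hdiag : Tendsto (fun i => B i i) atTop (𝓝 0) :=
    Metric.nhds_basis_closedBall.tendsto_right_iff.mpr fun ε hε =>
      let ⟨N, hN⟩ := hrows ε hε
      eventually_atTop.mpr ⟨N, fun i hi => by simpa using hN i hi i⟩
  have hsum : Summable fun i => B i i :=
    NonarchimedeanAddGroup.summable_of_tendsto_cofinite_zero (Nat.cofinite_eq_atTop ▸ hdiag)
  rw [minorSum_one, hsum.tsum_eq_zero_add, add_sub_right_comm]
  exact (norm_add_le_max _ _).trans <| max_le h00 <|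
    norm_tsum_le_of_forall_le_of_nonneg ((norm_nonneg _).trans h00) fun i => hoff _ _ (by simp)

end Fredholm

theorem unique_unit_root_of_normalized_general {K : Type*} [NormedField K] [CompleteSpace K]
    [IsUltrametricDist K]
    (π : K) (hπ1 : ‖π‖ < 1)
    (B : ℕ → ℕ → K)
    (hint : ∀ i k, ‖B i k‖ ≤ 1)
    (hcc : ∀ ε > (0 : ℝ), ∃ N, ∀ i ≥ N, ∀ k, ‖B i k‖ ≤ ε)
    (h00 : ‖B 0 0 - 1‖ ≤ ‖π‖)
    (hoff : ∀ i k, ¬(i = 0 ∧ k = 0) → ‖B i k‖ ≤ ‖π‖) :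
    (‖minorSum B 1 - 1‖ ≤ ‖π‖ ∧ ∀ j, 2 ≤ j → ‖minorSum B j‖ ≤ ‖π‖) ∧
    (∃! α : K, ‖α‖ = 1 ∧
      HasSum (fun j => (-1 : K) ^ j * minorSum B j * (α⁻¹) ^ j) 0) ∧
    (∀ α : K, ‖α‖ = 1 →
      HasSum (fun j => (-1 : K) ^ j * minorSum B j * (α⁻¹) ^ j) 0 → ‖α - 1‖ < 1) := by
  have hC1 := norm_minorSum_one_sub_one_le hoff hcc h00
  have hC2 := fun j => norm_minorSum_le_of_two_le hoff (norm_nonneg π) hint (j := j)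
  set c : ℕ → K := fun j => (-1) ^ j * minorSum B j
  have hc : Tendsto c atTop (𝓝 0) := by
    simpa [c, tendsto_zero_iff_norm_tendsto_zero] using tendsto_minorSum_atTop hint hcc
  have hc0 : ‖c 0 - 1‖ ≤ ‖π‖₊ := by simp [c, minorSum_zero]
  have hc1 : ‖c 1 + 1‖ ≤ ‖π‖₊ := by simpa [c, neg_add_eq_sub, norm_sub_rev] using hC1
  have hc2 : ∀ j, 2 ≤ j → ‖c j‖ ≤ ‖π‖₊ := by simpa [c] using hC2
  have hroot_near_one {t : K} := norm_sub_one_le_of_hasSum_mul_pow_eq_zero hc hc0 hc1 hc2 (t := t)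
  have hinv_le_one : ∀ α : K, ‖α‖ = 1 → ‖α⁻¹‖ ≤ 1 := fun α hα => by simp [hα]
  obtain ⟨t, ⟨ht, hzero⟩, huniq⟩ := existsUnique_hasSum_mul_pow_eq_zero hπ1 hc hc0 hc1 hc2
  have ht1 : ‖t‖ = 1 := norm_eq_one_of_norm_sub_one_lt ((hroot_near_one ht hzero).trans_lt hπ1)
  refine ⟨⟨hC1, hC2⟩, ⟨t⁻¹, ⟨by simp [ht1], by simpa using hzero⟩, ?_⟩, ?_⟩
  · rintro α ⟨hα, hroot⟩
    exact inv_eq_iff_eq_inv.mp (huniq α⁻¹ ⟨hinv_le_one α hα, hroot⟩)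
  · intro α hα hroot
    rw [← norm_inv_sub_one_of_norm_eq_one hα]
    exact (hroot_near_one (hinv_le_one α hα) hroot).trans_lt hπ1

/-- If the matrix `B` of a completely continuous operator satisfies
`B ≡ diag(1,0,0,…) mod π`, then `det(1 − BT) ≡ 1 − T mod π`; hence `det(1 − BT)`
has exactly one reciprocal root which is a unit, and that root is a 1-unit. -/
theorem unique_unit_root_of_normalized {K : Type*} [NormedField K] [CompleteSpace K]
    [IsUltrametricDist K]
    (π : K) (hπ0 : 0 < ‖π‖) (hπ1 : ‖π‖ < 1)
    (B : ℕ → ℕ → K)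
    (hint : ∀ i k, ‖B i k‖ ≤ 1)
    (hcc : ∀ ε > (0 : ℝ), ∃ N, ∀ i ≥ N, ∀ k, ‖B i k‖ ≤ ε)
    (h00 : ‖B 0 0 - 1‖ ≤ ‖π‖)
    (hoff : ∀ i k, ¬(i = 0 ∧ k = 0) → ‖B i k‖ ≤ ‖π‖) :
    (‖minorSum B 1 - 1‖ ≤ ‖π‖ ∧ ∀ j, 2 ≤ j → ‖minorSum B j‖ ≤ ‖π‖) ∧
    (∃! α : K, ‖α‖ = 1 ∧
      HasSum (fun j => (-1 : K) ^ j * minorSum B j * (α⁻¹) ^ j) 0) ∧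
    (∀ α : K, ‖α‖ = 1 →
      HasSum (fun j => (-1 : K) ^ j * minorSum B j * (α⁻¹) ^ j) 0 → ‖α - 1‖ < 1) :=
  unique_unit_root_of_normalized_general π hπ1 B hint hcc h00 hoff
end
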